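/- Let F be a field, let S be a finite index set, and for each i ∈ S let a_i, c_i ∈ ℕ with (a_i, c_i) ≠ (0,0) and p_i ∈ ℕ². The persistence module associated with the γ-product ⊕_{i ∈ S} F[x,y]/(x^{a_i} y^{c_i})(−p_i) — the functor ℕ² → Vect_F whose value at (m,n) is the direct sum over i ∈ S of the spans of the classes of the appropriately shifted monomials, with transition maps induced by multiplication by monomials — is naturally isomorphic to the direct sum of hook interval modules ⊕_{i ∈ S} H_{p_i, p_i + (a_i, c_i)}. In particular, the γ-product is hook-decomposable. -/

import Mathlib

open MvPolynomial CategoryTheory DirectSum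

attribute [local instance 2000] Preorder.smallCategory

set_option synthInstance.maxHeartbeats 1000000
set_option maxHeartbeats 1000000

noncomputable section

/-! ### The shifted quotient modules `F[x,y]/(x^a y^c)(−p)` and their persistence modules -/

/-- The ideal of `F[x,y]` generated by the single monomial `x^a * y^c`. -/
def monomialIdeal (F : Type) [Field F] (a c : ℕ) :
    Ideal (MvPolynomial (Fin 2) F) :=
  Ideal.span {(X 0 : MvPolynomial (Fin 2) F) ^ a * (X 1 : MvPolynomial (Fin 2) F) ^ c}

/-- The class of the monomial `x^m y^n` in the quotient `F[x,y]/(x^a y^c)`. -/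
def monomialClass (F : Type) [Field F] (a c m n : ℕ) :
    MvPolynomial (Fin 2) F ⧸ monomialIdeal F a c :=
  Ideal.Quotient.mk (monomialIdeal F a c)
    ((X 0 : MvPolynomial (Fin 2) F) ^ m * (X 1 : MvPolynomial (Fin 2) F) ^ n)

/-- The bidegree-`r` piece of the shifted module `F[x,y]/(x^a y^c)(−p)`:
the `F`-span of the class of `x^{r.1−p.1} y^{r.2−p.2}` when `r ≥ p`, zero otherwise. -/
def quotientPiece (F : Type) [Field F] (a c : ℕ) (p r : ℕ × ℕ) :
    Submodule F (MvPolynomial (Fin 2) F ⧸ monomialIdeal F a c) :=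
  if p ≤ r then Submodule.span F {monomialClass F a c (r.1 - p.1) (r.2 - p.2)} else ⊥

/-- Multiplication by `x^s y^t` as an `F`-linear endomorphism of `F[x,y]/(x^a y^c)`. -/
def mulMonomial (F : Type) [Field F] (a c s t : ℕ) :
    (MvPolynomial (Fin 2) F ⧸ monomialIdeal F a c) →ₗ[F]
      (MvPolynomial (Fin 2) F ⧸ monomialIdeal F a c) :=
  (LinearMap.lsmul (MvPolynomial (Fin 2) F) (MvPolynomial (Fin 2) F ⧸ monomialIdeal F a c)
      ((X 0 : MvPolynomial (Fin 2) F) ^ s * (X 1 : MvPolynomial (Fin 2) F) ^ t)).restrictScalars F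

lemma mulMonomial_class (F : Type) [Field F] (a c s t m n : ℕ) :
    mulMonomial F a c s t (monomialClass F a c m n) = monomialClass F a c (s + m) (t + n) := by
  show Ideal.Quotient.mk (monomialIdeal F a c)
      ((((X 0 : MvPolynomial (Fin 2) F) ^ s * (X 1 : MvPolynomial (Fin 2) F) ^ t)) *
        ((X 0 : MvPolynomial (Fin 2) F) ^ m * (X 1 : MvPolynomial (Fin 2) F) ^ n)) = _
  rw [mul_mul_mul_comm, ← pow_add, ← pow_add]
  rfl

lemma quotientPiece_mapsTo (F : Type) [Field F] (a c : ℕ) (p : ℕ × ℕ) {r r' : ℕ × ℕ}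
    (h : r ≤ r') :
    ∀ x ∈ quotientPiece F a c p r,
      mulMonomial F a c (r'.1 - r.1) (r'.2 - r.2) x ∈ quotientPiece F a c p r' := by
  intro x hx
  by_cases hp : p ≤ r
  · have hp' : p ≤ r' := hp.trans h
    rw [quotientPiece, if_pos hp] at hx
    rw [quotientPiece, if_pos hp']
    obtain ⟨k, rfl⟩ := Submodule.mem_span_singleton.mp hx
    rw [map_smul, mulMonomial_class, Nat.sub_add_sub_cancel h.1 hp.1,
      Nat.sub_add_sub_cancel h.2 hp.2]
    exact Submodule.smul_mem _ k (Submodule.mem_span_singleton_self _)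
  · rw [quotientPiece, if_neg hp, Submodule.mem_bot] at hx
    subst hx
    simp only [map_zero]
    exact Submodule.zero_mem _

/-- Transition map of the persistence module associated with the shifted quotient. -/
def quotientPieceMap (F : Type) [Field F] (a c : ℕ) (p : ℕ × ℕ) {r r' : ℕ × ℕ} (h : r ≤ r') :
    quotientPiece F a c p r →ₗ[F] quotientPiece F a c p r' :=
  (mulMonomial F a c (r'.1 - r.1) (r'.2 - r.2)).restrict (quotientPiece_mapsTo F a c p h)

lemma quotientPieceMap_refl (F : Type) [Field F] (a c : ℕ) (p r : ℕ × ℕ) :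
    quotientPieceMap F a c p (le_refl r) = LinearMap.id := by
  ext x
  show mulMonomial F a c (r.1 - r.1) (r.2 - r.2) (x : _) = (x : _)
  simp [mulMonomial]

lemma quotientPieceMap_trans (F : Type) [Field F] (a c : ℕ) (p : ℕ × ℕ) {r r' r'' : ℕ × ℕ}
    (h1 : r ≤ r') (h2 : r' ≤ r'') :
    (quotientPieceMap F a c p h2).comp (quotientPieceMap F a c p h1) =
      quotientPieceMap F a c p (h1.trans h2) := by
  ext x
  show mulMonomial F a c _ _ (mulMonomial F a c _ _ (x : _)) = mulMonomial F a c _ _ (x : _)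
  simp only [mulMonomial, LinearMap.coe_restrictScalars, LinearMap.lsmul_apply, smul_smul]
  congr 1
  rw [mul_mul_mul_comm, ← pow_add, ← pow_add, Nat.sub_add_sub_cancel h2.1 h1.1,
    Nat.sub_add_sub_cancel h2.2 h1.2]

/-- The persistence module (functor `ℕ² ⥤ Vect_F`) associated with the shifted quotient
`F[x,y]/(x^a y^c)(−p)`: its value at `r` is the `F`-span of the class of the shifted
monomial `x^{r.1−p.1} y^{r.2−p.2}` (zero if `¬ r ≥ p`), and its transition maps are
induced by multiplication by monomials. -/
def quotientPieceFunctor (F : Type) [Field F] (a c : ℕ) (p : ℕ × ℕ) :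
    (ℕ × ℕ) ⥤ ModuleCat F where
  obj r := ModuleCat.of F (quotientPiece F a c p r)
  map {r r'} h := ModuleCat.ofHom (quotientPieceMap F a c p (leOfHom h))
  map_id r := ModuleCat.hom_ext (quotientPieceMap_refl F a c p r)
  map_comp {r r' r''} h1 h2 :=
    ModuleCat.hom_ext (quotientPieceMap_trans F a c p (leOfHom h1) (leOfHom h2)).symm

/-- The persistence module associated with the γ-product with data `(aᵢ, cᵢ, pᵢ)`:
its value at `r` is `⊕ᵢ` (span of the class of the shifted monomial in
`F[x,y]/(x^{aᵢ} y^{cᵢ})`, zero when `¬ r ≥ pᵢ`), with transition maps induced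
componentwise by multiplication by monomials. -/

def gammaSumMap (F : Type) [Field F] (S : Type) (a c : S → ℕ) (p : S → ℕ × ℕ)
    {r r' : ℕ × ℕ} (h : r ≤ r') :
    (⨁ (i : S), ↥(quotientPiece F (a i) (c i) (p i) r)) →ₗ[F]
      (⨁ (i : S), ↥(quotientPiece F (a i) (c i) (p i) r')) :=
  DFinsupp.mapRange.linearMap (fun i => quotientPieceMap F (a i) (c i) (p i) h)

lemma gammaSumMap_refl (F : Type) [Field F] (S : Type) (a c : S → ℕ) (p : S → ℕ × ℕ)
    (r : ℕ × ℕ) : gammaSumMap F S a c p (le_refl r) = LinearMap.id := by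
  have h1 : (fun i => quotientPieceMap F (a i) (c i) (p i) (le_refl r)) =
      (fun i : S => LinearMap.id) :=
    funext fun i => quotientPieceMap_refl F (a i) (c i) (p i) r
  rw [gammaSumMap, h1, DFinsupp.mapRange.linearMap_id]

lemma gammaSumMap_trans (F : Type) [Field F] (S : Type) (a c : S → ℕ) (p : S → ℕ × ℕ)
    {r r' r'' : ℕ × ℕ} (h1 : r ≤ r') (h2 : r' ≤ r'') :
    (gammaSumMap F S a c p h2).comp (gammaSumMap F S a c p h1) =
      gammaSumMap F S a c p (h1.trans h2) := by
  have he : (fun i => quotientPieceMap F (a i) (c i) (p i) (h1.trans h2)) =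
      (fun i => (quotientPieceMap F (a i) (c i) (p i) h2).comp
        (quotientPieceMap F (a i) (c i) (p i) h1)) :=
    funext fun i => (quotientPieceMap_trans F (a i) (c i) (p i) h1 h2).symm
  rw [gammaSumMap, gammaSumMap, gammaSumMap, he, DFinsupp.mapRange.linearMap_comp]

def gammaProductFunctor (F : Type) [Field F] (S : Type) (a c : S → ℕ) (p : S → ℕ × ℕ) :
    (ℕ × ℕ) ⥤ ModuleCat F where
  obj r :=
    letI : ∀ i, AddCommGroup ↥(quotientPiece F (a i) (c i) (p i) r) := fun i => inferInstance
    ModuleCat.of F (⨁ (i : S), ↥(quotientPiece F (a i) (c i) (p i) r))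
  map {r r'} h :=
    letI : ∀ i r, AddCommGroup ↥(quotientPiece F (a i) (c i) (p i) r) := fun i r => inferInstance
    ModuleCat.ofHom (gammaSumMap F S a c p (leOfHom h))
  map_id r := ModuleCat.hom_ext (gammaSumMap_refl F S a c p r)
  map_comp {r r' r''} h1 h2 :=
    ModuleCat.hom_ext (gammaSumMap_trans F S a c p (leOfHom h1) (leOfHom h2)).symm


/-! ### Interval persistence modules (hook modules and upper-set modules) -/

/-- The value of the interval module of `region` at `r`, realised as a submodule of `F`:
all of `F` for `r ∈ region`, and `0` otherwise. -/
def intervalPiece (F : Type) [Field F] (region : Set (ℕ × ℕ)) (r : ℕ × ℕ) :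
    Submodule F F :=
  letI := Classical.propDecidable (r ∈ region)
  if r ∈ region then ⊤ else ⊥

/-- The underlying endomorphism of `F` for a transition map into position `r'`:
the identity if `r' ∈ region` and zero otherwise. -/
def intervalMapAux (F : Type) [Field F] (region : Set (ℕ × ℕ)) (r' : ℕ × ℕ) :
    F →ₗ[F] F :=
  letI := Classical.propDecidable (r' ∈ region)
  if r' ∈ region then LinearMap.id else 0

lemma intervalMap_mapsTo (F : Type) [Field F] (region : Set (ℕ × ℕ)) (r r' : ℕ × ℕ) :
    ∀ x ∈ intervalPiece F region r, intervalMapAux F region r' x ∈ intervalPiece F region r' := by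
  classical
  intro x hx
  by_cases h : r' ∈ region
  · simp [intervalPiece, h]
  · rw [intervalPiece, if_neg h, intervalMapAux, if_neg h, LinearMap.zero_apply]
    exact Submodule.zero_mem _

/-- Transition map of the interval module: the identity between points of the region,
and zero otherwise. -/
def intervalMap (F : Type) [Field F] (region : Set (ℕ × ℕ)) (r r' : ℕ × ℕ) :
    intervalPiece F region r →ₗ[F] intervalPiece F region r' :=
  (intervalMapAux F region r').restrict (intervalMap_mapsTo F region r r')

lemma intervalMap_refl (F : Type) [Field F] (region : Set (ℕ × ℕ)) (r : ℕ × ℕ) :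
    intervalMap F region r r = LinearMap.id := by
  classical
  ext x
  show intervalMapAux F region r x.1 = x.1
  by_cases h : r ∈ region
  · simp [intervalMapAux, h]
  · have hx : x.1 = 0 := by
      have key : ∀ y : F, y ∈ intervalPiece F region r → y = 0 := fun y hy => by
        rwa [intervalPiece, if_neg h, Submodule.mem_bot] at hy
      exact key _ x.2
    simp [intervalMapAux, h, hx]

lemma intervalMap_trans (F : Type) [Field F] (region : Set (ℕ × ℕ))
    (hconv : ∀ {r r' r'' : ℕ × ℕ}, r ≤ r' → r' ≤ r'' →
      r ∈ region → r'' ∈ region → r' ∈ region)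
    {r r' r'' : ℕ × ℕ} (h1 : r ≤ r') (h2 : r' ≤ r'') :
    (intervalMap F region r' r'').comp (intervalMap F region r r') =
      intervalMap F region r r'' := by
  classical
  ext x
  show intervalMapAux F region r'' (intervalMapAux F region r' x.1) =
    intervalMapAux F region r'' x.1
  by_cases h'' : r'' ∈ region
  · by_cases h : r ∈ region
    · have h' : r' ∈ region := hconv h1 h2 h h''
      simp [intervalMapAux, h', h'']
    · have hx : x.1 = 0 := by
        have key : ∀ y : F, y ∈ intervalPiece F region r → y = 0 := fun y hy => by
          rwa [intervalPiece, if_neg h, Submodule.mem_bot] at hy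
        exact key _ x.2
      simp [intervalMapAux, hx]
  · simp [intervalMapAux, h'']

/-- The interval persistence module of a convex region of `ℕ²`: value `F` on the region
(zero elsewhere), identity transition maps within the region, zero maps otherwise. -/
def intervalFunctor (F : Type) [Field F] (region : Set (ℕ × ℕ))
    (hconv : ∀ {r r' r'' : ℕ × ℕ}, r ≤ r' → r' ≤ r'' →
      r ∈ region → r'' ∈ region → r' ∈ region) :
    (ℕ × ℕ) ⥤ ModuleCat F where
  obj r := ModuleCat.of F (intervalPiece F region r)
  map {r r'} _ := ModuleCat.ofHom (intervalMap F region r r')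
  map_id r := ModuleCat.hom_ext (intervalMap_refl F region r)
  map_comp {r r' r''} h1 h2 :=
    ModuleCat.hom_ext (intervalMap_trans F region hconv (leOfHom h1) (leOfHom h2)).symm


/-- The hook region `H(p,q) = {r : r ≥ p, ¬ r ≥ q}`. -/
def hookRegion (p q : ℕ × ℕ) : Set (ℕ × ℕ) := {r | p ≤ r ∧ ¬ q ≤ r}

lemma hookRegion_convex {p q r r' r'' : ℕ × ℕ} (h1 : r ≤ r') (h2 : r' ≤ r'')
    (hr : r ∈ hookRegion p q) (hr'' : r'' ∈ hookRegion p q) : r' ∈ hookRegion p q :=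
  ⟨hr.1.trans h1, fun hq => hr''.2 (hq.trans h2)⟩

/-- The hook interval module `H_{p,q}`. -/
def hookFunctor (F : Type) [Field F] (p q : ℕ × ℕ) : (ℕ × ℕ) ⥤ ModuleCat F :=
  intervalFunctor F (hookRegion p q) (fun h1 h2 hr hr'' => hookRegion_convex h1 h2 hr hr'')


def hookSumMap (F : Type) [Field F] (S : Type) (p q : S → ℕ × ℕ) (r r' : ℕ × ℕ) :
    (⨁ (i : S), ↥(intervalPiece F (hookRegion (p i) (q i)) r)) →ₗ[F]
      (⨁ (i : S), ↥(intervalPiece F (hookRegion (p i) (q i)) r')) :=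
  DFinsupp.mapRange.linearMap (fun i => intervalMap F (hookRegion (p i) (q i)) r r')

lemma hookSumMap_refl (F : Type) [Field F] (S : Type) (p q : S → ℕ × ℕ) (r : ℕ × ℕ) :
    hookSumMap F S p q r r = LinearMap.id := by
  have h1 : (fun i => intervalMap F (hookRegion (p i) (q i)) r r) =
      (fun i : S => LinearMap.id) :=
    funext fun i => intervalMap_refl F (hookRegion (p i) (q i)) r
  rw [hookSumMap, h1, DFinsupp.mapRange.linearMap_id]

lemma hookSumMap_trans (F : Type) [Field F] (S : Type) (p q : S → ℕ × ℕ)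
    {r r' r'' : ℕ × ℕ} (h1 : r ≤ r') (h2 : r' ≤ r'') :
    (hookSumMap F S p q r' r'').comp (hookSumMap F S p q r r') = hookSumMap F S p q r r'' := by
  have he : (fun i => intervalMap F (hookRegion (p i) (q i)) r r'') =
      (fun i => (intervalMap F (hookRegion (p i) (q i)) r' r'').comp
        (intervalMap F (hookRegion (p i) (q i)) r r')) :=
    funext fun i =>
      (intervalMap_trans F (hookRegion (p i) (q i))
        (fun a b ha hb => hookRegion_convex a b ha hb) h1 h2).symm
  rw [hookSumMap, hookSumMap, hookSumMap, he, DFinsupp.mapRange.linearMap_comp]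

/-- The direct sum `⊕ᵢ H_{pᵢ,qᵢ}` of hook interval modules, as a persistence module. -/
def hookSumFunctor (F : Type) [Field F] (S : Type) (p q : S → ℕ × ℕ) :
    (ℕ × ℕ) ⥤ ModuleCat F where
  obj r := ModuleCat.of F (⨁ (i : S), ↥(intervalPiece F (hookRegion (p i) (q i)) r))
  map {r r'} _ := ModuleCat.ofHom (hookSumMap F S p q r r')
  map_id r := ModuleCat.hom_ext (hookSumMap_refl F S p q r)
  map_comp {r r' r''} h1 h2 :=
    ModuleCat.hom_ext (hookSumMap_trans F S p q (leOfHom h1) (leOfHom h2)).symm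


/- The isomorphism is built summand by summand, as `k ↦ k • [x^{r₁-p₁} y^{r₂-p₂}]` from
`H_{p,p+(a,c)}(r)` to the degree-`r` piece of `F[x,y]/(x^a y^c)(-p)`.  It is bijective because
that class is nonzero exactly when `r ∈ H(p, p+(a,c))`, and natural because multiplying by
`x^s y^t` shifts the monomial, killing it precisely when the degree leaves the hook. -/

section HookSummand

variable (F : Type) [Field F] {a c : ℕ} {p r r' : ℕ × ℕ}

theorem monomialClass_eq_zero_iff (m n : ℕ) :
    monomialClass F a c m n = 0 ↔ a ≤ m ∧ c ≤ n := by
  rw [monomialClass, Ideal.Quotient.eq_zero_iff_mem, monomialIdeal, Ideal.mem_span_singleton]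
  simp only [X_pow_eq_monomial, monomial_mul, one_mul, monomial_dvd_monomial, one_ne_zero,
    false_or, dvd_refl, and_true]
  constructor
  · intro h
    exact ⟨by simpa using h 0, by simpa using h 1⟩
  · rintro ⟨ha, hc⟩ s
    fin_cases s <;> simp [ha, hc]

theorem monomialClass_sub_eq_zero_iff (hp : p ≤ r) :
    monomialClass F a c (r.1 - p.1) (r.2 - p.2) = 0 ↔ r ∉ hookRegion p (p + (a, c)) := by
  have := hp.1
  have := hp.2
  simp only [monomialClass_eq_zero_iff, hookRegion, Set.mem_ofPred_eq, Prod.le_def,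
    Prod.fst_add, Prod.snd_add]
  omega

theorem mulMonomial_monomialClass_sub (hp : p ≤ r) (h : r ≤ r') :
    mulMonomial F a c (r'.1 - r.1) (r'.2 - r.2) (monomialClass F a c (r.1 - p.1) (r.2 - p.2)) =
      monomialClass F a c (r'.1 - p.1) (r'.2 - p.2) := by
  rw [mulMonomial_class, Nat.sub_add_sub_cancel h.1 hp.1, Nat.sub_add_sub_cancel h.2 hp.2]

theorem subsingleton_intervalPiece {region : Set (ℕ × ℕ)} (hr : r ∉ region) :
    Subsingleton (intervalPiece F region r) :=
  Submodule.subsingleton_iff_eq_bot.mpr (by simp [intervalPiece, hr])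

theorem subsingleton_quotientPiece (hr : r ∉ hookRegion p (p + (a, c))) :
    Subsingleton (quotientPiece F a c p r) := by
  rw [Submodule.subsingleton_iff_eq_bot, quotientPiece]
  split_ifs with hp
  · simp [(monomialClass_sub_eq_zero_iff F hp).mpr hr]
  · rfl

theorem toSpanSingleton_mem_quotientPiece (x : F)
    (hx : x ∈ intervalPiece F (hookRegion p (p + (a, c))) r) :
    LinearMap.toSpanSingleton F _ (monomialClass F a c (r.1 - p.1) (r.2 - p.2)) x ∈
      quotientPiece F a c p r := by
  by_cases hr : r ∈ hookRegion p (p + (a, c))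
  · rw [quotientPiece, if_pos hr.1]
    exact Submodule.smul_mem _ x (Submodule.mem_span_singleton_self _)
  · rw [Submodule.subsingleton_iff_eq_bot.mp (subsingleton_intervalPiece F hr),
      Submodule.mem_bot] at hx
    simp [hx]

variable (a c p r)

def hookToQuotientPiece :
    intervalPiece F (hookRegion p (p + (a, c))) r →ₗ[F] quotientPiece F a c p r :=
  (LinearMap.toSpanSingleton F _ (monomialClass F a c (r.1 - p.1) (r.2 - p.2))).restrict
    (toSpanSingleton_mem_quotientPiece F)

theorem hookToQuotientPiece_bijective : Function.Bijective (hookToQuotientPiece F a c p r) := by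
  by_cases hr : r ∈ hookRegion p (p + (a, c))
  · have hv : monomialClass F a c (r.1 - p.1) (r.2 - p.2) ≠ 0 :=
      fun h => (monomialClass_sub_eq_zero_iff F hr.1).mp h hr
    refine ⟨fun x y hxy => Subtype.ext (smul_left_injective F hv (congrArg Subtype.val hxy)), ?_⟩
    rintro ⟨z, hz⟩
    rw [quotientPiece, if_pos hr.1] at hz
    obtain ⟨k, rfl⟩ := Submodule.mem_span_singleton.mp hz
    exact ⟨⟨k, by simp [intervalPiece, hr]⟩, rfl⟩
  · have := subsingleton_intervalPiece F hr
    have := subsingleton_quotientPiece F hr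
    exact ⟨fun x y _ => Subsingleton.elim x y, fun z => ⟨0, Subsingleton.elim _ z⟩⟩

variable {r}

theorem quotientPieceMap_comp_hookToQuotientPiece (h : r ≤ r') :
    (quotientPieceMap F a c p h).comp (hookToQuotientPiece F a c p r) =
      (hookToQuotientPiece F a c p r').comp (intervalMap F (hookRegion p (p + (a, c))) r r') := by
  ext x
  by_cases hr : r ∈ hookRegion p (p + (a, c))
  · show mulMonomial F a c (r'.1 - r.1) (r'.2 - r.2)
          ((x : F) • monomialClass F a c (r.1 - p.1) (r.2 - p.2)) =
        intervalMapAux F (hookRegion p (p + (a, c))) r' (x : F) •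
          monomialClass F a c (r'.1 - p.1) (r'.2 - p.2)
    rw [map_smul, mulMonomial_monomialClass_sub F hr.1 h]
    by_cases hr' : r' ∈ hookRegion p (p + (a, c))
    · simp [intervalMapAux, hr']
    · rw [(monomialClass_sub_eq_zero_iff F (hr.1.trans h)).mpr hr', smul_zero, smul_zero]
  · have := subsingleton_intervalPiece F hr
    rw [Subsingleton.elim x 0, map_zero, map_zero]

end HookSummand

theorem gammaProduct_iso_hookSum_general (F : Type) [Field F] (S : Type)
    (a c : S → ℕ) (p : S → ℕ × ℕ) :
    Nonempty (gammaProductFunctor F S a c p ≅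
      hookSumFunctor F S p (fun i => p i + (a i, c i))) := by
  let ψ r i := hookToQuotientPiece F (a i) (c i) (p i) r
  refine ⟨Iso.symm <| NatIso.ofComponents
    (fun r => (DFinsupp.mapRange.linearEquiv fun i =>
      LinearEquiv.ofBijective (ψ r i) (hookToQuotientPiece_bijective F _ _ _ r)).toModuleIso) ?_⟩
  intro r r' h
  have natural : (DFinsupp.mapRange.linearMap (ψ r')).comp
        (hookSumMap F S p (fun i => p i + (a i, c i)) r r') =
      (gammaSumMap F S a c p (leOfHom h)).comp (DFinsupp.mapRange.linearMap (ψ r)) := by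
    rw [hookSumMap, gammaSumMap, ← DFinsupp.mapRange.linearMap_comp,
      ← DFinsupp.mapRange.linearMap_comp]
    exact congrArg _ (funext fun i =>
      (quotientPieceMap_comp_hookToQuotientPiece F _ _ _ (leOfHom h)).symm)
  exact ModuleCat.hom_ext natural

/-- The persistence module associated with the γ-product
`⊕_{i ∈ S} F[x,y]/(x^{aᵢ} y^{cᵢ})(−pᵢ)` is naturally isomorphic to the direct sum of
hook interval modules `⊕_{i ∈ S} H_{pᵢ, pᵢ + (aᵢ, cᵢ)}`; in particular the γ-product is
hook-decomposable. -/
theorem gammaProduct_iso_hookSum (F : Type) [Field F] (S : Type) [Fintype S]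
    (a c : S → ℕ) (hac : ∀ i, (a i, c i) ≠ (0, 0)) (p : S → ℕ × ℕ) :
    Nonempty (gammaProductFunctor F S a c p ≅
      hookSumFunctor F S p (fun i => p i + (a i, c i))) :=
  gammaProduct_iso_hookSum_general F S a c p

end
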